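/- Effective horizon of goal MDPs: in a deterministic goal MDP where the exploration policy gives every action positive probability, suppose there exists p > 0 such that from every state-action pair (at any timestep) from which the goal is reachable, the probability that the exploration policy reaches the goal by time T is at least p. Then GORP with k = 1 and n = ⌈log(2T)/p⌉ rollouts succeeds with probability at least 1/2, so the effective horizon satisfies H ≤ 1 + log_A(log(2T)/p). -/

import Mathlib

open Finset Classical

/-- Total reward of playing a list of actions from state `s` in a deterministic MDP. -/
def seqReturn {S : Type*} (A : ℕ) (f : S → Fin A → S) (R : S → Fin A → ℝ) :
    S → List (Fin A) → ℝ
  | _, [] => 0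
  | s, a :: rest => R s a + seqReturn A f R (f s a) rest

/-- Value function of a (time-indexed, stochastic) policy by fuel recursion. -/
noncomputable def polV {S : Type*} (A : ℕ) (f : S → Fin A → S) (R : S → Fin A → ℝ)
    (pi : ℕ → S → Fin A → ℝ) : ℕ → ℕ → S → ℝ
  | _, 0, _ => 0
  | t, n + 1, s => ∑ a : Fin A, pi t s a * (R s a + polV A f R pi (t + 1) n (f s a))

/-- `Q^π_t(s,a)` in a horizon-`T` deterministic MDP. -/
noncomputable def polQ {S : Type*} (A T : ℕ) (f : S → Fin A → S) (R : S → Fin A → ℝ)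
    (pi : ℕ → S → Fin A → ℝ) (t : ℕ) (s : S) (a : Fin A) : ℝ :=
  R s a + polV A f R pi (t + 1) (T - t) (f s a)

/-- Optimal value function by fuel recursion. -/
noncomputable def optV {S : Type*} (A : ℕ) (f : S → Fin A → S) (R : S → Fin A → ℝ) :
    ℕ → S → ℝ
  | 0, _ => 0
  | n + 1, s => ⨆ a : Fin A, (R s a + optV A f R n (f s a))

/-- Optimal Q-function at timestep `t` (horizon `T`). -/
noncomputable def optQ {S : Type*} (A T : ℕ) (f : S → Fin A → S) (R : S → Fin A → ℝ)
    (t : ℕ) (s : S) (a : Fin A) : ℝ :=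
  R s a + optV A f R (T - t) (f s a)

/-- Trajectory of a deterministic policy: `polState ... t` is the state at timestep `t+1`. -/
def polState {S : Type*} (A : ℕ) (f : S → Fin A → S) (p : ℕ → S → Fin A) (s1 : S) : ℕ → S
  | 0 => s1
  | t + 1 => f (polState A f p s1 t) (p (t + 1) (polState A f p s1 t))

/-- Probability, under the (time-indexed) policy `pi`, of taking the given list of actions
starting from state `s` at timestep `t` (in a deterministic MDP with transitions `f`). -/
noncomputable def pathWeight {S : Type*} (A : ℕ) (f : S → Fin A → S)
    (pi : ℕ → S → Fin A → ℝ) : ℕ → S → List (Fin A) → ℝ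
  | _, _, [] => 1
  | t, s, a :: rest => pi t s a * pathWeight A f pi (t + 1) (f s a) rest

/-! Call a state at stage `i` good if it lies in `G` or can still reach `G` within the remaining
`T - i` steps. From a good state outside `G`, GORP can move to a bad state only if every rollout
of the action it commits to returned `0`. That action maximizes the estimate, so then every
rollout of an optimal action `a*` returned `0` too, which has probability at most `(1 - p) ^ n`
since each of them reaches the goal with probability `Q^π(s, a*) ≥ p`. A union bound over the `T`
stages, with `T (1 - p) ^ n ≤ 1 / 2`, keeps the whole run good with probability at least `1 / 2`,
and a run that ends in `G` has return `1 = V*(s1)`. -/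

section Tuples

variable {X M : Type*} [Fintype X] [AddCommMonoid M]

theorem sum_pi_fin_succ_cons {m : ℕ} (F : (Fin (m + 1) → X) → M) :
    ∑ v, F v = ∑ x, ∑ v : Fin m → X, F (Fin.cons x v) := by
  rw [← (Fin.consEquiv fun _ => X).sum_comp, Fintype.sum_prod_type]
  rfl

theorem sum_pi_fin_succ_snoc {m : ℕ} (F : (Fin (m + 1) → X) → M) :
    ∑ v, F v = ∑ v : Fin m → X, ∑ x, F (Fin.snoc v x) := by
  rw [← (Fin.snocEquiv fun _ => X).sum_comp, Fintype.sum_prod_type_right]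
  rfl

theorem sum_take_ofFn {m k : ℕ} (hk : k ≤ m) (F : List X → M) :
    ∑ v : Fin m → X, F ((List.ofFn v).take k)
      = Fintype.card X ^ (m - k) • ∑ w : Fin k → X, F (List.ofFn w) := by
  induction m generalizing k F with
  | zero =>
    obtain rfl : k = 0 := by omega
    simp
  | succ m ih =>
    cases k with
    | zero => simp
    | succ k =>
      simp only [sum_pi_fin_succ_cons, List.ofFn_cons, List.take_succ_cons, Nat.add_sub_add_right,
        Finset.smul_sum]
      exact Finset.sum_congr rfl fun x _ => by
        rw [ih (by omega) fun l => F (x :: l), Finset.smul_sum]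

end Tuples

theorem sum_piFinset_prod_prod {ι κ X R : Type*} [Fintype ι] [Fintype κ] [DecidableEq ι]
    [DecidableEq κ] [CommSemiring R] (t : ι → κ → Finset X) (g : ι → κ → X → R) :
    ∑ c ∈ Fintype.piFinset fun a => Fintype.piFinset (t a), ∏ a, ∏ j, g a j (c a j)
      = ∏ a, ∏ j, ∑ x ∈ t a j, g a j x := by
  simp only [Finset.prod_univ_sum]

namespace StagedProcess

variable {S C : Type*} (step : ℕ → S → C → S) (s₀ : S)

def run {N : ℕ} (ω : Fin N → C) : ℕ → S
  | 0 => s₀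
  | i + 1 => if h : i < N then step i (run ω i) (ω ⟨i, h⟩) else run ω i

theorem eq_run_of_succ {N : ℕ} (ω : Fin N → C) (x : ℕ → S) (h₀ : x 0 = s₀)
    (hsucc : ∀ i (hi : i < N), x (i + 1) = step i (x i) (ω ⟨i, hi⟩)) :
    ∀ i ≤ N, x i = run step s₀ ω i
  | 0, _ => h₀
  | i + 1, hi => by
    rw [run, dif_pos (by omega), hsucc i (by omega), eq_run_of_succ ω x h₀ hsucc i (by omega)]

theorem run_snoc {N : ℕ} (ω : Fin N → C) (c : C) :
    ∀ i ≤ N, run step s₀ (Fin.snoc ω c : Fin (N + 1) → C) i = run step s₀ ω i := by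
  refine eq_run_of_succ _ _ _ _ rfl fun i hi => ?_
  rw [run, dif_pos (by omega)]
  simp [Fin.snoc, hi]

theorem run_snoc_succ {N : ℕ} (ω : Fin N → C) (c : C) :
    run step s₀ (Fin.snoc ω c : Fin (N + 1) → C) (N + 1) = step N (run step s₀ ω N) c := by
  rw [run, dif_pos N.lt_succ_self, run_snoc step s₀ ω c N le_rfl]
  simp [Fin.snoc]

variable (W : ℕ → S → C → ℝ)

def runWeight {N : ℕ} (ω : Fin N → C) : ℝ :=
  ∏ k : Fin N, W k (run step s₀ ω k) (ω k)

variable {step s₀ W}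

theorem runWeight_nonneg (hW : ∀ i s c, 0 ≤ W i s c) {N : ℕ} (ω : Fin N → C) :
    0 ≤ runWeight step s₀ W ω :=
  Finset.prod_nonneg fun _ _ => hW _ _ _

theorem runWeight_snoc {N : ℕ} (ω : Fin N → C) (c : C) :
    runWeight step s₀ W (Fin.snoc ω c : Fin (N + 1) → C)
      = runWeight step s₀ W ω * W N (run step s₀ ω N) c := by
  rw [runWeight, Fin.prod_univ_castSucc]
  simp [runWeight, run_snoc step s₀ ω c _ (Nat.le_of_lt (Fin.is_lt _)),
    run_snoc step s₀ ω c N le_rfl]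

variable [Fintype C] {κ : ℕ → ℝ}

theorem sum_runWeight (hmass : ∀ i s, ∑ c, W i s c = κ i) (N : ℕ) :
    ∑ ω : Fin N → C, runWeight step s₀ W ω = ∏ k ∈ range N, κ k := by
  induction N with
  | zero => simp [runWeight]
  | succ N ih =>
    simp only [sum_pi_fin_succ_snoc, runWeight_snoc, ← Finset.mul_sum, hmass, ← Finset.sum_mul,
      ih, Finset.prod_range_succ]

variable (good : ℕ → S → Prop) {q : ℝ} (hW : ∀ i s c, 0 ≤ W i s c)
  (hmass : ∀ i s, ∑ c, W i s c = κ i) (hq : 0 ≤ q)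
  (hexit : ∀ i s, good i s →
    ∑ c ∈ univ.filter (fun c => ¬ good (i + 1) (step i s c)), W i s c ≤ q * κ i)
include hW hmass hq hexit

theorem sum_exit_snoc_le {N : ℕ} (ω : Fin N → C) :
    ∑ c ∈ univ.filter (fun c =>
        ¬ ∀ i ≤ N + 1, good i (run step s₀ (Fin.snoc ω c : Fin (N + 1) → C) i)),
      runWeight step s₀ W (Fin.snoc ω c : Fin (N + 1) → C)
    ≤ (if ¬ ∀ i ≤ N, good i (run step s₀ ω i) then runWeight step s₀ W ω * κ N else 0)
      + runWeight step s₀ W ω * (q * κ N) := by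
  have hω := runWeight_nonneg (step := step) (s₀ := s₀) hW ω
  simp only [runWeight_snoc, ← Finset.mul_sum]
  by_cases hgood : ∀ i ≤ N, good i (run step s₀ ω i)
  · have hsnoc : ∀ c,
        (∀ i ≤ N + 1, good i (run step s₀ (Fin.snoc ω c : Fin (N + 1) → C) i))
          ↔ good (N + 1) (step N (run step s₀ ω N) c) := by
      intro c
      refine ⟨fun h => run_snoc_succ step s₀ ω c ▸ h (N + 1) le_rfl, fun h i hi => ?_⟩
      rcases Nat.lt_succ_iff_lt_or_eq.mp (Nat.lt_succ_of_le hi) with hi | rfl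
      · rw [run_snoc step s₀ ω c i (by omega)]
        exact hgood i (by omega)
      · rwa [run_snoc_succ]
    rw [if_neg (not_not_intro hgood), zero_add]
    simp only [hsnoc]
    exact mul_le_mul_of_nonneg_left (hexit N _ (hgood N le_rfl)) hω
  · have hbad : ∀ c,
        ¬ ∀ i ≤ N + 1, good i (run step s₀ (Fin.snoc ω c : Fin (N + 1) → C) i) :=
      fun c h => hgood fun i hi => run_snoc step s₀ ω c i hi ▸ h i (by omega)
    have hκ : 0 ≤ κ N := hmass N s₀ ▸ Finset.sum_nonneg fun c _ => hW N s₀ c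
    simp only [hbad, not_false_eq_true, Finset.filter_true, if_pos hgood, hmass]
    nlinarith [mul_nonneg hω (mul_nonneg hq hκ)]

theorem sum_runWeight_exit_le (h₀ : good 0 s₀) (N : ℕ) :
    ∑ ω ∈ univ.filter (fun ω : Fin N → C => ¬ ∀ i ≤ N, good i (run step s₀ ω i)),
      runWeight step s₀ W ω ≤ N * q * ∏ k ∈ range N, κ k := by
  induction N with
  | zero => simp [run, h₀]
  | succ N ih =>
    calc _ = ∑ ω : Fin N → C, ∑ c ∈ univ.filter (fun c =>
            ¬ ∀ i ≤ N + 1, good i (run step s₀ (Fin.snoc ω c : Fin (N + 1) → C) i)),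
          runWeight step s₀ W (Fin.snoc ω c : Fin (N + 1) → C) := by
          simp only [Finset.sum_filter, sum_pi_fin_succ_snoc]
      _ ≤ ∑ ω : Fin N → C, ((if ¬ ∀ i ≤ N, good i (run step s₀ ω i)
            then runWeight step s₀ W ω * κ N else 0) + runWeight step s₀ W ω * (q * κ N)) :=
          Finset.sum_le_sum fun ω _ => sum_exit_snoc_le good hW hmass hq hexit ω
      _ ≤ N * q * (∏ k ∈ range N, κ k) * κ N + (∏ k ∈ range N, κ k) * (q * κ N) := by
          rw [Finset.sum_add_distrib, ← Finset.sum_filter, ← Finset.sum_mul, ← Finset.sum_mul,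
            sum_runWeight hmass]
          have hκ : 0 ≤ κ N := hmass N s₀ ▸ Finset.sum_nonneg fun c _ => hW N s₀ c
          gcongr
      _ = (N + 1 : ℕ) * q * ∏ k ∈ range (N + 1), κ k := by
          rw [Finset.prod_range_succ]
          push_cast
          ring

theorem le_sum_runWeight_stay (h₀ : good 0 s₀) (N : ℕ) :
    (1 - N * q) * ∏ k ∈ range N, κ k
      ≤ ∑ ω ∈ univ.filter (fun ω : Fin N → C => ∀ i ≤ N, good i (run step s₀ ω i)),
          runWeight step s₀ W ω := by
  have hsplit := Finset.sum_filter_add_sum_filter_not univ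
    (fun ω : Fin N → C => ∀ i ≤ N, good i (run step s₀ ω i)) (runWeight step s₀ W)
  rw [sum_runWeight hmass] at hsplit
  linarith [sum_runWeight_exit_le good hW hmass hq hexit h₀ N]

end StagedProcess

open StagedProcess

section DeterministicMDP

variable {S : Type*} {A : ℕ} (f : S → Fin A → S) (R : S → Fin A → ℝ)
  (pi : ℕ → S → Fin A → ℝ)

theorem pathWeight_nonneg (hpi : ∀ t s a, 0 ≤ pi t s a) (t : ℕ) (s : S) (l : List (Fin A)) :
    0 ≤ pathWeight A f pi t s l := by
  induction l generalizing t s with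
  | nil => exact zero_le_one
  | cons a l ih => exact mul_nonneg (hpi t s a) (ih _ _)

variable {pi} (hpi : ∀ t s, ∑ a, pi t s a = 1)
include hpi

theorem sum_pathWeight_ofFn (k t : ℕ) (s : S) :
    ∑ w : Fin k → Fin A, pathWeight A f pi t s (List.ofFn w) = 1 := by
  induction k generalizing t s with
  | zero => simp [pathWeight]
  | succ k ih =>
    simp only [sum_pi_fin_succ_cons, List.ofFn_cons, pathWeight, ← Finset.mul_sum, ih, mul_one,
      hpi]

theorem sum_pathWeight_mul_seqReturn (k t : ℕ) (s : S) :
    ∑ w : Fin k → Fin A, pathWeight A f pi t s (List.ofFn w) * seqReturn A f R s (List.ofFn w)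
      = polV A f R pi t k s := by
  induction k generalizing t s with
  | zero => simp [seqReturn, polV]
  | succ k ih =>
    simp only [sum_pi_fin_succ_cons, List.ofFn_cons, pathWeight, seqReturn, polV]
    refine Finset.sum_congr rfl fun a _ => ?_
    simp only [mul_assoc, mul_add, ← Finset.mul_sum, Finset.sum_add_distrib, ← Finset.sum_mul,
      sum_pathWeight_ofFn f hpi, ih, one_mul]

theorem polQ_eq_sum (T t : ℕ) (s : S) (a : Fin A) :
    polQ A T f R pi t s a = ∑ w : Fin (T - t) → Fin A,
      pathWeight A f pi (t + 1) (f s a) (List.ofFn w) * seqReturn A f R s (a :: List.ofFn w) := by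
  simp only [seqReturn, mul_add, Finset.sum_add_distrib, ← Finset.sum_mul,
    sum_pathWeight_ofFn f hpi, one_mul, sum_pathWeight_mul_seqReturn f R hpi, polQ]

omit hpi

theorem seqReturn_le_optV {m : ℕ} {l : List (Fin A)} (hl : l.length = m) (s : S) :
    seqReturn A f R s l ≤ optV A f R m s := by
  induction l generalizing s m with
  | nil => simp [← hl, seqReturn, optV]
  | cons a l ih =>
    subst hl
    rw [List.length_cons, optV]
    exact (add_le_add_right (ih rfl (f s a)) _).trans
      (le_ciSup (f := fun a => R s a + optV A f R l.length (f s a)) (Set.finite_range _).bddAbove a)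

variable [Nonempty (Fin A)]

theorem exists_add_optV_eq_optV_succ (m : ℕ) (s : S) :
    ∃ a, R s a + optV A f R m (f s a) = optV A f R (m + 1) s :=
  exists_eq_ciSup_of_finite

theorem exists_seqReturn_eq_optV (m : ℕ) (s : S) :
    ∃ l : List (Fin A), l.length = m ∧ seqReturn A f R s l = optV A f R m s := by
  induction m generalizing s with
  | zero => exact ⟨[], rfl, by simp [seqReturn, optV]⟩
  | succ m ih =>
    obtain ⟨a, ha⟩ := exists_add_optV_eq_optV_succ f R m s
    obtain ⟨l, hl, hret⟩ := ih (f s a)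
    exact ⟨a :: l, by simp [hl], by rw [seqReturn, hret, ha]⟩

end DeterministicMDP

structure IsGoalMDP {S : Type*} {A : ℕ} (f : S → Fin A → S) (R : S → Fin A → ℝ)
    (G : Set S) : Prop where
  absorbing : ∀ s ∈ G, ∀ a, f s a = s
  reward_eq : ∀ s a, R s a = if s ∉ G ∧ f s a ∈ G then 1 else 0

namespace IsGoalMDP

variable {S : Type*} {A : ℕ} {f : S → Fin A → S} {R : S → Fin A → ℝ} {G : Set S}
  (hG : IsGoalMDP f R G)
include hG

theorem foldl_of_mem {s : S} (hs : s ∈ G) (l : List (Fin A)) : l.foldl f s = s := by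
  induction l with
  | nil => rfl
  | cons a l ih => rwa [List.foldl_cons, hG.absorbing s hs]

theorem seqReturn_eq (s : S) (l : List (Fin A)) :
    seqReturn A f R s l = if s ∉ G ∧ l.foldl f s ∈ G then 1 else 0 := by
  induction l generalizing s with
  | nil => simp [seqReturn]
  | cons a l ih =>
    rw [seqReturn, hG.reward_eq, ih, List.foldl_cons]
    by_cases hs : s ∈ G
    · simp [hs, hG.absorbing s hs]
    · by_cases hfa : f s a ∈ G
      · simp [hs, hfa, hG.foldl_of_mem hfa]
      · simp [hs, hfa]

theorem seqReturn_eq_zero_or_one (s : S) (l : List (Fin A)) :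
    seqReturn A f R s l = 0 ∨ seqReturn A f R s l = 1 := by
  rw [hG.seqReturn_eq]
  split_ifs <;> simp

theorem polQ_le_one {pi : ℕ → S → Fin A → ℝ} (hpi₀ : ∀ t s a, 0 ≤ pi t s a)
    (hpi : ∀ t s, ∑ a, pi t s a = 1) (T t : ℕ) (s : S) (a : Fin A) :
    polQ A T f R pi t s a ≤ 1 := by
  rw [polQ_eq_sum f R hpi, ← sum_pathWeight_ofFn f hpi (T - t) (t + 1) (f s a)]
  refine Finset.sum_le_sum fun w _ =>
    mul_le_of_le_one_right (pathWeight_nonneg f pi hpi₀ _ _ _) ?_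
  rcases hG.seqReturn_eq_zero_or_one s (a :: List.ofFn w) with h | h <;> simp [h]

variable [Nonempty (Fin A)]

theorem optV_eq_zero_or_one (m : ℕ) (s : S) : optV A f R m s = 0 ∨ optV A f R m s = 1 := by
  obtain ⟨l, -, hl⟩ := exists_seqReturn_eq_optV f R m s
  exact hl ▸ hG.seqReturn_eq_zero_or_one s l

theorem notMem_of_optV_eq_one {m : ℕ} {s : S} (h : optV A f R m s = 1) : s ∉ G := by
  obtain ⟨l, -, hl⟩ := exists_seqReturn_eq_optV f R m s
  rw [← hl, hG.seqReturn_eq] at h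
  by_contra hs
  simp [hs] at h

theorem seqReturn_eq_optV_of_foldl_mem {m : ℕ} {s : S} (hs : optV A f R m s = 1)
    {l : List (Fin A)} (hl : l.foldl f s ∈ G) : seqReturn A f R s l = optV A f R m s := by
  rw [hG.seqReturn_eq, if_pos ⟨hG.notMem_of_optV_eq_one hs, hl⟩, hs]

theorem le_one_of_le_polQ {pi : ℕ → S → Fin A → ℝ} (hpi₀ : ∀ t s a, 0 ≤ pi t s a)
    (hpi : ∀ t s, ∑ a, pi t s a = 1) {T : ℕ} (hT : 1 ≤ T) {s : S} (hs : optV A f R T s = 1)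
    {p : ℝ} (hpQ : ∀ t s a, 1 ≤ t → t ≤ T → optQ A T f R t s a = 1 →
      p ≤ polQ A T f R pi t s a) :
    p ≤ 1 := by
  obtain ⟨a, ha⟩ := exists_add_optV_eq_optV_succ f R (T - 1) s
  refine (hpQ 1 s a le_rfl hT ?_).trans (hG.polQ_le_one hpi₀ hpi T 1 s a)
  rw [optQ, ha, Nat.sub_add_cancel hT, hs]

end IsGoalMDP

section LeastArgmax

variable {α : Type*} [Fintype α] [LinearOrder α] [Nonempty α] (g : α → ℝ)

noncomputable def leastArgmax : α :=
  (univ.filter fun a => ∀ b, g b ≤ g a).min' <| by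
    obtain ⟨a, -, ha⟩ := Finset.exists_max_image univ g univ_nonempty
    exact ⟨a, Finset.mem_filter.2 ⟨mem_univ a, fun b => ha b (mem_univ b)⟩⟩

theorem le_leastArgmax (b : α) : g b ≤ g (leastArgmax g) := by
  have hmem := Finset.min'_mem (univ.filter fun a => ∀ b, g b ≤ g a)
  exact (Finset.mem_filter.1 (hmem _)).2 b

theorem eq_leastArgmax {a : α} (hmax : ∀ b, g b ≤ g a)
    (hleast : ∀ b, (∀ b', g b' ≤ g b) → a ≤ b) : a = leastArgmax g :=
  le_antisymm (hleast _ (le_leastArgmax g))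
    (Finset.min'_le _ _ (Finset.mem_filter.2 ⟨mem_univ a, hmax⟩))

end LeastArgmax

section GORP

variable {S : Type*} (A T n : ℕ) (f : S → Fin A → S) (R : S → Fin A → ℝ) (G : Set S)
  (pi : ℕ → S → Fin A → ℝ)

def rolloutReturn (i : ℕ) (s : S) (a : Fin A) (v : Fin T → Fin A) : ℝ :=
  seqReturn A f R s ((a :: List.ofFn v).take (T - i))

noncomputable def rolloutWeight (i : ℕ) (s : S) (a : Fin A) (v : Fin T → Fin A) : ℝ :=
  pathWeight A f pi (i + 2) (f s a) ((List.ofFn v).take (T - i - 1))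

noncomputable def mcQ (i : ℕ) (s : S) (c : Fin A → Fin n → Fin T → Fin A) (a : Fin A) :
    ℝ :=
  (∑ j, rolloutReturn A T f R i s a (c a j)) / n

noncomputable def stageWeight (i : ℕ) (s : S) (c : Fin A → Fin n → Fin T → Fin A) : ℝ :=
  ∏ a, ∏ j, rolloutWeight A T f pi i s a (c a j)

/-- Total weight of the samples of stage `i`: it is not `1`, since each coordinate of a suffix that
the rollout does not play contributes a factor `A`. -/
def stageMass (i : ℕ) : ℝ :=
  (((A : ℝ) ^ (T - (T - i - 1))) ^ n) ^ A

noncomputable def gorpStep [Nonempty (Fin A)] (i : ℕ) (s : S)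
    (c : Fin A → Fin n → Fin T → Fin A) : S :=
  f s (leastArgmax (mcQ A T n f R i s c))

def GoalReachable (i : ℕ) (s : S) : Prop :=
  s ∈ G ∨ optV A f R (T - i) s = 1

variable {A T n f R G pi}

theorem rolloutReturn_eq_of_lt {i : ℕ} (hi : i < T) (s : S) (a : Fin A) (v : Fin T → Fin A) :
    rolloutReturn A T f R i s a v
      = R s a + seqReturn A f R (f s a) ((List.ofFn v).take (T - (i + 1))) := by
  rw [rolloutReturn, show T - i = T - (i + 1) + 1 by omega, List.take_succ_cons, seqReturn]

theorem sum_rolloutWeight (hpi : ∀ t s, ∑ a, pi t s a = 1) (i : ℕ) (s : S) (a : Fin A) :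
    ∑ v, rolloutWeight A T f pi i s a v = (A : ℝ) ^ (T - (T - i - 1)) := by
  simp [rolloutWeight, sum_take_ofFn (by omega : T - i - 1 ≤ T), sum_pathWeight_ofFn f hpi]

theorem sum_rolloutWeight_mul_rolloutReturn (hpi : ∀ t s, ∑ a, pi t s a = 1) {i : ℕ}
    (hi : i < T) (s : S) (a : Fin A) :
    ∑ v, rolloutWeight A T f pi i s a v * rolloutReturn A T f R i s a v
      = (A : ℝ) ^ (T - (T - i - 1)) * polQ A T f R pi (i + 1) s a := by
  simp only [rolloutWeight, rolloutReturn_eq_of_lt hi, Nat.sub_sub]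
  rw [sum_take_ofFn (by omega) fun l =>
      pathWeight A f pi (i + 2) (f s a) l * (R s a + seqReturn A f R (f s a) l),
    polQ_eq_sum f R hpi]
  simp [seqReturn]

theorem rolloutReturn_nonneg (hG : IsGoalMDP f R G) (i : ℕ) (s : S) (a : Fin A)
    (v : Fin T → Fin A) : 0 ≤ rolloutReturn A T f R i s a v := by
  rcases hG.seqReturn_eq_zero_or_one s ((a :: List.ofFn v).take (T - i)) with h | h <;>
    simp [rolloutReturn, h]

theorem sum_rolloutWeight_filter_rolloutReturn_eq_zero_le (hG : IsGoalMDP f R G)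
    (hpi : ∀ t s, ∑ a, pi t s a = 1) {i : ℕ} (hi : i < T) {s : S} {a : Fin A} {p : ℝ}
    (hp : p ≤ polQ A T f R pi (i + 1) s a) :
    ∑ v ∈ univ.filter (fun v => rolloutReturn A T f R i s a v = 0),
      rolloutWeight A T f pi i s a v
      ≤ (1 - p) * (A : ℝ) ^ (T - (T - i - 1)) := by
  have hind : ∀ v,
      (if rolloutReturn A T f R i s a v = 0 then rolloutWeight A T f pi i s a v else 0)
        = rolloutWeight A T f pi i s a v * (1 - rolloutReturn A T f R i s a v) := by
    intro v
    rcases hG.seqReturn_eq_zero_or_one s ((a :: List.ofFn v).take (T - i)) with h | h <;>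
      simp [rolloutReturn, h]
  rw [Finset.sum_filter]
  simp only [hind, mul_sub, mul_one, Finset.sum_sub_distrib, sum_rolloutWeight hpi,
    sum_rolloutWeight_mul_rolloutReturn hpi hi]
  have : (0 : ℝ) ≤ (A : ℝ) ^ (T - (T - i - 1)) := by positivity
  nlinarith

theorem rolloutReturn_eq_zero_of_not_goalReachable [Nonempty (Fin A)] (hG : IsGoalMDP f R G)
    {i : ℕ} {s : S} {a : Fin A} (ha : ¬ GoalReachable A T f R G (i + 1) (f s a))
    (v : Fin T → Fin A) : rolloutReturn A T f R i s a v = 0 := by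
  obtain ⟨haG, haV⟩ := not_or.mp ha
  rcases Nat.lt_or_ge i T with hi | hi
  · rw [rolloutReturn_eq_of_lt hi, hG.reward_eq, if_neg fun h => haG h.2, zero_add]
    have hV := (hG.optV_eq_zero_or_one (T - (i + 1)) (f s a)).resolve_right haV
    have hle := seqReturn_le_optV f R (m := T - (i + 1))
      (l := (List.ofFn v).take (T - (i + 1))) (by simp) (f s a)
    refine (hG.seqReturn_eq_zero_or_one _ _).resolve_right fun h => ?_
    linarith
  · simp [rolloutReturn, Nat.sub_eq_zero_of_le hi, seqReturn]

/-- GORP commits to a maximizer of the estimate, and an action leading out of `GoalReachable` has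
estimate `0`: so if GORP leaves `GoalReachable`, every rollout of every action returned `0`. -/
theorem rolloutReturn_eq_zero_of_not_goalReachable_gorpStep [Nonempty (Fin A)]
    (hG : IsGoalMDP f R G) {i : ℕ} {s : S} {c : Fin A → Fin n → Fin T → Fin A}
    (hc : ¬ GoalReachable A T f R G (i + 1) (gorpStep A T n f R i s c)) (a : Fin A) (j : Fin n) :
    rolloutReturn A T f R i s a (c a j) = 0 := by
  have hQa : mcQ A T n f R i s c a ≤ 0 := by
    refine (le_leastArgmax _ a).trans_eq ?_
    simp [mcQ, rolloutReturn_eq_zero_of_not_goalReachable hG hc]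
  have hnonneg : ∀ j' ∈ univ, 0 ≤ rolloutReturn A T f R i s a (c a j') :=
    fun j' _ => rolloutReturn_nonneg hG _ _ _ _
  rw [mcQ, div_le_iff₀ (by exact_mod_cast j.pos), zero_mul] at hQa
  exact (Finset.sum_eq_zero_iff_of_nonneg hnonneg).mp
    (le_antisymm hQa (Finset.sum_nonneg hnonneg)) j (mem_univ j)

theorem filter_not_goalReachable_gorpStep_subset [Nonempty (Fin A)] (hG : IsGoalMDP f R G)
    (i : ℕ) (s : S) (a : Fin A) :
    univ.filter (fun c => ¬ GoalReachable A T f R G (i + 1) (gorpStep A T n f R i s c))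
      ⊆ Fintype.piFinset fun a' => Fintype.piFinset fun _ : Fin n =>
          if a' = a then univ.filter (fun v => rolloutReturn A T f R i s a v = 0) else univ := by
  intro c hc
  simp only [Finset.mem_filter, Fintype.mem_piFinset] at hc ⊢
  intro a' j
  by_cases h : a' = a
  · subst h
    simp [rolloutReturn_eq_zero_of_not_goalReachable_gorpStep hG hc.2]
  · simp [h]

end GORP

section GORPStage

variable {S : Type*} {A T n : ℕ} {f : S → Fin A → S} {R : S → Fin A → ℝ} {G : Set S}
  {pi : ℕ → S → Fin A → ℝ}

theorem stageWeight_nonneg (hpi₀ : ∀ t s a, 0 ≤ pi t s a) (i : ℕ) (s : S)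
    (c : Fin A → Fin n → Fin T → Fin A) : 0 ≤ stageWeight A T n f pi i s c :=
  Finset.prod_nonneg fun _ _ => Finset.prod_nonneg fun _ _ => pathWeight_nonneg f pi hpi₀ _ _ _

theorem sum_stageWeight (hpi : ∀ t s, ∑ a, pi t s a = 1) (i : ℕ) (s : S) :
    ∑ c, stageWeight A T n f pi i s c = stageMass A T n i := by
  have h := sum_piFinset_prod_prod
    (fun (_ : Fin A) (_ : Fin n) => (univ : Finset (Fin T → Fin A)))
    fun a _ v => rolloutWeight A T f pi i s a v
  simp only [Fintype.piFinset_univ, sum_rolloutWeight hpi] at h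
  simpa [stageWeight, stageMass] using h

theorem sum_stageWeight_exit_le [Nonempty (Fin A)] (hG : IsGoalMDP f R G)
    (hpi₀ : ∀ t s a, 0 ≤ pi t s a) (hpi : ∀ t s, ∑ a, pi t s a = 1) {p : ℝ}
    (hp1 : p ≤ 1) (hpQ : ∀ t s a, 1 ≤ t → t ≤ T → optQ A T f R t s a = 1 →
      p ≤ polQ A T f R pi t s a)
    {i : ℕ} {s : S} (hs : GoalReachable A T f R G i s) :
    ∑ c ∈ univ.filter (fun c => ¬ GoalReachable A T f R G (i + 1) (gorpStep A T n f R i s c)),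
      stageWeight A T n f pi i s c ≤ (1 - p) ^ n * stageMass A T n i := by
  rcases hs with hsG | hsV
  · have hstay : ∀ c, GoalReachable A T f R G (i + 1) (gorpStep A T n f R i s c) :=
      fun c => Or.inl (by rw [gorpStep, hG.absorbing s hsG]; exact hsG)
    simp only [hstay, not_true_eq_false, Finset.filter_false, Finset.sum_empty]
    have : 0 ≤ 1 - p := by linarith
    unfold stageMass
    positivity
  have hi : i < T := by
    by_contra hi
    simp [Nat.sub_eq_zero_of_le (not_lt.mp hi), optV] at hsV
  obtain ⟨a, ha⟩ := exists_add_optV_eq_optV_succ f R (T - (i + 1)) s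
  have hpa : p ≤ polQ A T f R pi (i + 1) s a := by
    refine hpQ (i + 1) s a (by omega) hi ?_
    rw [optQ, ha, show T - (i + 1) + 1 = T - i by omega, hsV]
  have hsub := filter_not_goalReachable_gorpStep_subset (T := T) (n := n) hG i s a
  set Z : Fin A → Finset (Fin T → Fin A) := fun a' =>
    if a' = a then univ.filter fun v => rolloutReturn A T f R i s a v = 0 else univ
  calc _ ≤ ∑ c ∈ Fintype.piFinset fun a' => Fintype.piFinset fun _ : Fin n => Z a',
          stageWeight A T n f pi i s c :=
        Finset.sum_le_sum_of_subset_of_nonneg hsub fun c _ _ => stageWeight_nonneg hpi₀ i s c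
    _ = ∏ a', ∏ _j : Fin n, ∑ v ∈ Z a', rolloutWeight A T f pi i s a' v :=
        sum_piFinset_prod_prod _ _
    _ ≤ ∏ a', ∏ _j : Fin n,
          ((if a' = a then 1 - p else 1) * (A : ℝ) ^ (T - (T - i - 1))) := by
        have hρ : ∀ a' (Z' : Finset (Fin T → Fin A)),
            0 ≤ ∑ v ∈ Z', rolloutWeight A T f pi i s a' v :=
          fun _ _ => Finset.sum_nonneg fun _ _ => pathWeight_nonneg f pi hpi₀ _ _ _
        refine Finset.prod_le_prod (fun a' _ => Finset.prod_nonneg fun _ _ => hρ _ _)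
          fun a' _ => Finset.prod_le_prod (fun _ _ => hρ _ _) fun _ _ => ?_
        by_cases h : a' = a
        · subst h
          simpa [Z] using sum_rolloutWeight_filter_rolloutReturn_eq_zero_le hG hpi hi hpa
        · simp [Z, h, sum_rolloutWeight hpi]
    _ = (1 - p) ^ n * stageMass A T n i := by
        simp only [Finset.prod_mul_distrib, Finset.prod_const, Finset.card_univ, Fintype.card_fin,
          Finset.prod_pow, Finset.prod_ite_eq', Finset.mem_univ, if_true, stageMass]

end GORPStage

theorem foldl_ofFn_eq_of_succ {S α : Type*} (f : S → α → S) (x : ℕ → S) (a : ℕ → α)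
    (hx : ∀ i, x (i + 1) = f (x i) (a i)) (m : ℕ) :
    (List.ofFn fun i : Fin m => a i).foldl f (x 0) = x m := by
  induction m with
  | zero => rfl
  | succ m ih =>
    rw [List.ofFn_succ', List.concat_eq_append, List.foldl_concat]
    simp only [Fin.val_castSucc, Fin.val_last, ih, hx]

theorem mul_one_sub_pow_le_half {x p : ℝ} {n : ℕ} (hx : 0 < x) (hp : 0 < p) (hp1 : p ≤ 1)
    (hn : Real.log (2 * x) / p ≤ n) : x * (1 - p) ^ n ≤ 1 / 2 := by
  have hlog : Real.log (2 * x) ≤ n * p := (div_le_iff₀ hp).mp hn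
  calc x * (1 - p) ^ n ≤ x * Real.exp (-p) ^ n := by
        have : 0 ≤ 1 - p := by linarith
        gcongr
        exact Real.one_sub_le_exp_neg p
    _ = x * Real.exp (-(n * p)) := by rw [← Real.exp_nat_mul]; ring_nf
    _ ≤ x * Real.exp (-Real.log (2 * x)) := by gcongr
    _ = 1 / 2 := by
        rw [Real.exp_neg, Real.exp_log (by positivity)]
        field_simp

/--
Effective horizon of goal MDPs.  In a deterministic goal MDP (absorbing
goal set `G`, reward `1` exactly on transitions entering `G`, optimal return `1` from the
start state) with an exploration policy `pi` that gives every action positive probability,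
suppose `p > 0` is such that from every state-action pair (at any timestep) from which the
goal is reachable, the probability that `pi` reaches the goal by time `T` is at least `p`.
Run GORP with lookahead `k = 1` and `n ≥ log(2T)/p` rollouts per action: at each iteration
`i` the estimate `Q̂` of an action is the average of `n` rollout returns (the action
followed by `pi` until the horizon), and GORP commits to the least maximizer of `Q̂`.
Then the probability (under the rollout randomness `ω`, whose distribution is the product
of the policy path-probabilities of all sampled suffixes) that GORP's action sequence is
optimal is at least `1/2`.  (Hence `n_1 ≤ ⌈log(2T)/p⌉` and the effective horizon satisfies
`H ≤ 1 + log_A(log(2T)/p)`.)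
-/
theorem goal_mdp_gorp_success
    {S : Type*} (A T n : ℕ) (hA : 0 < A) (hT : 1 ≤ T)
    (f : S → Fin A → S) (R : S → Fin A → ℝ) (s1 : S)
    (G : Set S)
    (habs : ∀ s ∈ G, ∀ a, f s a = s)
    (hR : R = fun s a => if s ∉ G ∧ f s a ∈ G then 1 else 0)
    (pi : ℕ → S → Fin A → ℝ)
    (hpos : ∀ t s a, 0 < pi t s a)
    (hprob : ∀ t s, ∑ a : Fin A, pi t s a = 1)
    (hreach : optV A f R T s1 = 1)
    (p : ℝ) (hp : 0 < p)
    (hpQ : ∀ t s a, 1 ≤ t → t ≤ T →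
      optQ A T f R t s a = 1 → p ≤ polQ A T f R pi t s a)
    (hn : Real.log (2 * T) / p ≤ (n : ℝ))
    -- GORP's Monte-Carlo Q-value estimates (lookahead k = 1):
    -- ω i a j is the random action suffix of the j-th rollout for action a at iteration i
    (Qhat : ℕ → S → Fin A → (Fin T → Fin A → Fin n → (Fin T → Fin A)) → ℝ)
    (hQhat : Qhat = fun i s a ω =>
      (∑ j : Fin n,
        seqReturn A f R s
          ((a :: List.ofFn (ω ⟨min i (T - 1), by omega⟩ a j)).take (T - i))) / n)
    -- GORP's trajectory: `act ω i` is the least maximizer of `Q̂` at iteration i,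
    -- `traj ω i` the state reached at iteration i
    (traj : (Fin T → Fin A → Fin n → (Fin T → Fin A)) → ℕ → S)
    (act : (Fin T → Fin A → Fin n → (Fin T → Fin A)) → ℕ → Fin A)
    (htraj0 : ∀ ω, traj ω 0 = s1)
    (htraj : ∀ ω i, traj ω (i + 1) = f (traj ω i) (act ω i))
    (hact : ∀ ω i,
      (∀ a' : Fin A, Qhat i (traj ω i) a' ω ≤ Qhat i (traj ω i) (act ω i) ω) ∧
      (∀ a : Fin A,
        (∀ a' : Fin A, Qhat i (traj ω i) a' ω ≤ Qhat i (traj ω i) a ω) →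
        act ω i ≤ a))
    -- probability weight of a realization ω of all rollout suffixes
    (wt : (Fin T → Fin A → Fin n → (Fin T → Fin A)) → ℝ)
    (hwt : wt = fun ω => ∏ i : Fin T, ∏ a : Fin A, ∏ j : Fin n,
      pathWeight A f pi ((i : ℕ) + 2) (f (traj ω i) a)
        ((List.ofFn (ω i a j)).take (T - (i : ℕ) - 1))) :
    1 ≤ 2 * ∑ ω ∈ Finset.univ.filter
        (fun ω : Fin T → Fin A → Fin n → (Fin T → Fin A) =>
          seqReturn A f R s1 (List.ofFn (fun i : Fin T => act ω i))
            = optV A f R T s1),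
        wt ω := by
  have : Nonempty (Fin A) := ⟨⟨0, hA⟩⟩
  have hG : IsGoalMDP f R G := ⟨habs, fun s a => by rw [hR]⟩
  have hpi₀ : ∀ t s a, 0 ≤ pi t s a := fun t s a => (hpos t s a).le
  have hp1 : p ≤ 1 := hG.le_one_of_le_polQ hpi₀ hprob hT hreach hpQ
  have hrun : ∀ ω, ∀ i ≤ T, traj ω i = run (gorpStep A T n f R) s1 ω i := by
    intro ω
    refine eq_run_of_succ _ _ ω (traj ω) (htraj0 ω) fun i hi => ?_
    have hQ : ∀ a, Qhat i (traj ω i) a ω = mcQ A T n f R i (traj ω i) (ω ⟨i, hi⟩) a := by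
      simp only [hQhat, mcQ, rolloutReturn, show min i (T - 1) = i by omega, implies_true]
    obtain ⟨hmax, hleast⟩ := hact ω i
    simp only [hQ] at hmax hleast
    rw [htraj, gorpStep, ← eq_leastArgmax _ hmax hleast]
  have hwt' : ∀ ω, wt ω = runWeight (gorpStep A T n f R) s1 (stageWeight A T n f pi) ω :=
    fun ω => hwt ▸ Finset.prod_congr rfl fun i _ => by rw [hrun ω i i.is_lt.le]; rfl
  have hsucc : ∀ ω,
      (∀ i ≤ T, GoalReachable A T f R G i (run (gorpStep A T n f R) s1 ω i)) →
      seqReturn A f R s1 (List.ofFn fun i : Fin T => act ω i) = optV A f R T s1 := by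
    intro ω hω
    refine hG.seqReturn_eq_optV_of_foldl_mem hreach ?_
    rw [← htraj0 ω, foldl_ofFn_eq_of_succ f (traj ω) (act ω) (htraj ω), hrun ω T le_rfl]
    simpa [GoalReachable, optV] using hω T le_rfl
  have hstay := le_sum_runWeight_stay (GoalReachable A T f R G) (stageWeight_nonneg hpi₀)
    (sum_stageWeight hprob) (pow_nonneg (by linarith) n)
    (fun i s hs => sum_stageWeight_exit_le hG hpi₀ hprob hp1 hpQ hs)
    (Or.inr (by simpa using hreach)) T
  have hmass : 1 ≤ ∏ k ∈ range T, stageMass A T n k :=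
    Finset.one_le_prod fun _ _ =>
      one_le_pow₀ (one_le_pow₀ (one_le_pow₀ (by exact_mod_cast hA)))
  have hunion := mul_one_sub_pow_le_half (x := T) (by positivity) hp hp1 hn
  calc (1 : ℝ) ≤ 2 * ((1 - T * (1 - p) ^ n) * ∏ k ∈ range T, stageMass A T n k) := by
        nlinarith
    _ ≤ _ := by
      gcongr
      refine hstay.trans ?_
      simp only [← hwt']
      exact Finset.sum_le_sum_of_subset_of_nonneg
        (Finset.monotone_filter_right _ fun ω _ => hsucc ω)
        fun ω _ _ => hwt' ω ▸ runWeight_nonneg (stageWeight_nonneg hpi₀) ω
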